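/- arXiv:2402.06400 — 2 statements merged into one kernel-verified Lean document; each statement's English description precedes it below -/
import Mathlib

section
/- Let ℛ(t) = M(t)D(t)ℱ(M(t)−1)ℱ^{-1}. For all s > 1/2 and all θ with 0 ≤ θ ≤ 1, there is a constant C such that for all |t| ≥ 1 and all Schwartz functions f on ℝ, ‖ℛ(t)f‖_{L^∞(ℝ)} ≤ C |t|^{−(1/2+θ)} ‖f‖_{H^{s+2θ}(ℝ)}. -/
open MeasureTheory Complex Filter
open scoped ENNReal Real Topology

noncomputable section

/-- Fourier transform, convention `(2π)^{-1/2} ∫ f x e^{-i x ξ} dx`. -/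
def FT (f : ℝ → ℂ) (ξ : ℝ) : ℂ :=
  (((2 * Real.pi) ^ (-(1:ℝ)/2) : ℝ) : ℂ) * ∫ x : ℝ, f x * Complex.exp (-Complex.I * x * ξ)

/-- Inverse Fourier transform. -/
def FTinv (f : ℝ → ℂ) (x : ℝ) : ℂ :=
  (((2 * Real.pi) ^ (-(1:ℝ)/2) : ℝ) : ℂ) * ∫ ξ : ℝ, f ξ * Complex.exp (Complex.I * x * ξ)

/-- Free Schrödinger group `U(t) = e^{i(t/2)∂_x²}` as a Fourier multiplier. -/
def Ugrp (t : ℝ) (f : ℝ → ℂ) : ℝ → ℂ :=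
  FTinv fun ξ => Complex.exp (-Complex.I * t * ξ ^ 2 / 2) * FT f ξ

/-- Multiplication operator `M(t) = e^{i x²/(2t)}`. -/
def Mop (t : ℝ) (f : ℝ → ℂ) : ℝ → ℂ :=
  fun x => Complex.exp (Complex.I * x ^ 2 / (2 * t)) * f x

/-- Dilation `D(t) f (x) = (it)^{-1/2} f (x/t)`. -/
def Dop (t : ℝ) (f : ℝ → ℂ) : ℝ → ℂ :=
  fun x => (Complex.I * t) ^ (-(1/2 : ℂ)) * f (x / t)

/-- Galilean operator `J(t) = x + i t ∂_x`. -/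
def Jop (t : ℝ) (f : ℝ → ℂ) : ℝ → ℂ :=
  fun x => x * f x + Complex.I * t * deriv f x

/-- `ℛ(t) = M(t) D(t) ℱ (M(t)-1) ℱ⁻¹`. -/
def Rop (t : ℝ) (f : ℝ → ℂ) : ℝ → ℂ :=
  Mop t (Dop t (FT fun x => (Complex.exp (Complex.I * x ^ 2 / (2 * t)) - 1) * FTinv f x))

/-- Sobolev `H^s` norm, via the Fourier transform. -/
def HsNorm (s : ℝ) (f : ℝ → ℂ) : ℝ≥0∞ :=
  eLpNorm (fun ξ => ((1 + ξ ^ 2) ^ (s / 2) : ℝ) * FT f ξ) 2 volume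

/-- The norm of `Σ = H¹ ∩ ℱ(H¹)`. -/
def SigmaNorm (f : ℝ → ℂ) : ℝ≥0∞ :=
  eLpNorm f 2 volume + eLpNorm (deriv f) 2 volume + eLpNorm (fun x => x * f x) 2 volume

/-- The norm of the space `ℋ`. -/
def HcalNorm (f : ℝ → ℂ) : ℝ≥0∞ :=
  eLpNorm (fun x => Real.sqrt (1 + x ^ 2) * deriv f x) 2 volume
    + eLpNorm (fun x => Real.sqrt (1 + x ^ 2) ^ 3 * f x) 2 volume

/-- Gauge-invariant cubic nonlinearity `|u|² u`. -/
def cub (f : ℝ → ℂ) : ℝ → ℂ := fun x => (Complex.normSq (f x) : ℂ) * f x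

/-- `u` is a (pointwise classical) solution of `i ∂_t u + (1/2) ∂_x² u = λ |u|² u`. -/
def IsSolution (lam : ℝ) (u : ℝ → ℝ → ℂ) : Prop :=
  ∀ t x : ℝ,
    Complex.I * deriv (fun s => u s x) t + (1/2 : ℂ) * deriv (deriv (u t)) x
      = lam * Complex.normSq (u t x) * u t x


open MeasureTheory Complex Filter FourierTransform Real
open scoped ENNReal NNReal Real Topology

lemma ofReal_norm_eq_coe_nnnorm {E : Type*} [SeminormedAddCommGroup E] (a : E) :
    ENNReal.ofReal ‖a‖ = (‖a‖₊ : ℝ≥0∞) := ofReal_norm a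

lemma aux_exp_sub_one (a : ℝ) : ‖Complex.exp (Complex.I * a) - 1‖ ≤ |a| := by
  have h1 : Complex.exp (Complex.I * a) - 1
      = Complex.ofReal (Real.cos a - 1) + Complex.ofReal (Real.sin a) * Complex.I := by
    rw [mul_comm, Complex.exp_mul_I]
    push_cast
    ring
  rw [h1]
  rw [Complex.norm_def, Complex.normSq_add_mul_I]
  have hc : Real.cos (2 * (a/2)) = Real.cos a := by rw [mul_div_cancel₀]; norm_num
  have hs2 := Real.cos_sq (a/2)
  rw [hc] at hs2
  have hp := Real.sin_sq_add_cos_sq a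
  have hp2 := Real.sin_sq_add_cos_sq (a/2)
  have h2 : (Real.cos a - 1) ^ 2 + Real.sin a ^ 2 = 4 * Real.sin (a / 2) ^ 2 := by
    nlinarith
  rw [h2]
  have h3 : 4 * Real.sin (a / 2) ^ 2 ≤ a ^ 2 := by
    have := Real.abs_sin_le_abs (x := a / 2)
    have h4 : Real.sin (a/2) ^ 2 ≤ (a/2) ^ 2 := by
      rw [← _root_.sq_abs, ← _root_.sq_abs (a/2)]
      exact pow_le_pow_left₀ (abs_nonneg _) this 2
    nlinarith
  calc Real.sqrt (4 * Real.sin (a / 2) ^ 2) ≤ Real.sqrt (a ^ 2) := Real.sqrt_le_sqrt h3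
  _ = |a| := Real.sqrt_sq_eq_abs a

lemma aux_exp_sub_one_two (a : ℝ) : ‖Complex.exp (Complex.I * a) - 1‖ ≤ 2 := by
  calc ‖Complex.exp (Complex.I * a) - 1‖ ≤ ‖Complex.exp (Complex.I * a)‖ + ‖(1:ℂ)‖ :=
        norm_sub_le _ _
  _ ≤ 2 := by
      rw [mul_comm, Complex.norm_exp_ofReal_mul_I]
      norm_num

lemma aux_exp_interp {θ : ℝ} (hθ0 : 0 ≤ θ) (hθ1 : θ ≤ 1) (a : ℝ) :
    ‖Complex.exp (Complex.I * a) - 1‖ ≤ 2 ^ (1 - θ) * |a| ^ θ := by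
  set m := ‖Complex.exp (Complex.I * a) - 1‖ with hm
  have hm0 : 0 ≤ m := norm_nonneg _
  have hm2 : m ≤ 2 := aux_exp_sub_one_two a
  have hma : m ≤ |a| := aux_exp_sub_one a
  rcases eq_or_lt_of_le hm0 with h | h
  · rw [← h]; positivity
  · have : m = m ^ (1 - θ) * m ^ θ := by
      rw [← Real.rpow_add h]; norm_num
    rw [this]
    exact mul_le_mul (Real.rpow_le_rpow hm0 hm2 (by linarith))
      (Real.rpow_le_rpow hm0 hma hθ0) (Real.rpow_nonneg hm0 θ) (by positivity)

lemma FTinv_eq_fourierIntegral (f : ℝ → ℂ) (x : ℝ) :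
    FTinv f x = (((2 * Real.pi) ^ (-(1:ℝ)/2) : ℝ) : ℂ) * 𝓕 f (-x / (2 * Real.pi)) := by
  rw [FTinv, Real.fourier_real_eq_integral_exp_smul]
  congr 1
  apply MeasureTheory.integral_congr_ae
  filter_upwards with v
  rw [smul_eq_mul, mul_comm]
  congr 1
  have h : -2 * Real.pi * v * (-x / (2 * Real.pi)) = x * v := by
    field_simp
  rw [h]
  push_cast
  ring

lemma FT_eq_fourierIntegral (f : ℝ → ℂ) (ξ : ℝ) :
    FT f ξ = (((2 * Real.pi) ^ (-(1:ℝ)/2) : ℝ) : ℂ) * 𝓕 f (ξ / (2 * Real.pi)) := by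
  rw [FT, Real.fourier_real_eq_integral_exp_smul]
  congr 1
  apply MeasureTheory.integral_congr_ae
  filter_upwards with v
  rw [smul_eq_mul, mul_comm]
  congr 1
  have h : -2 * Real.pi * v * (ξ / (2 * Real.pi)) = -(v * ξ) := by
    field_simp
  rw [h]
  push_cast
  ring

lemma continuous_FTinv (f : SchwartzMap ℝ ℂ) : Continuous (FTinv ⇑f) := by
  have hcont : Continuous (𝓕 ⇑f) :=
    VectorFourier.fourierIntegral_continuous Real.continuous_fourierChar
      (by exact continuous_inner) f.integrable
  have : (FTinv ⇑f) = fun x => (((2 * Real.pi) ^ (-(1:ℝ)/2) : ℝ) : ℂ) *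
      𝓕 ⇑f (-x / (2 * Real.pi)) := funext fun x => FTinv_eq_fourierIntegral _ x
  rw [this]
  fun_prop

lemma FTinv_eq_FT_neg (f : ℝ → ℂ) (x : ℝ) : FTinv f x = FT f (-x) := by
  rw [FTinv, FT]
  congr 1
  apply MeasureTheory.integral_congr_ae
  filter_upwards with v
  congr 1
  push_cast
  ring

lemma norm_exp_quad {t : ℝ} (ht : t ≠ 0) (u : ℝ) :
    ‖Complex.exp (Complex.I * (u:ℂ) ^ 2 / (2 * (t:ℂ)))‖ = 1 := by
  have h : Complex.I * (u:ℂ) ^ 2 / (2 * (t:ℂ)) = ((u^2/(2*t) : ℝ) : ℂ) * Complex.I := by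
    have h2t : (2 * (t:ℂ)) ≠ 0 := by
      simp [ht]
    field_simp
    push_cast
    ring
  rw [h, Complex.norm_exp_ofReal_mul_I]

lemma arg_exp_quad {t : ℝ} (ht : t ≠ 0) (u : ℝ) :
    Complex.I * (u:ℂ) ^ 2 / (2 * (t:ℂ)) = Complex.I * ((u^2/(2*t) : ℝ) : ℂ) := by
  have h2t : (2 * (t:ℂ)) ≠ 0 := by simp [ht]
  field_simp
  push_cast
  ring

lemma norm_cpow_It {t : ℝ} (ht : t ≠ 0) :
    ‖(Complex.I * (t:ℂ)) ^ (-(1/2 : ℂ))‖ = |t| ^ (-(1/2) : ℝ) := by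
  have hne : Complex.I * (t:ℂ) ≠ 0 :=
    mul_ne_zero Complex.I_ne_zero (Complex.ofReal_ne_zero.mpr ht)
  rw [Complex.norm_cpow_of_ne_zero hne]
  simp [Complex.norm_I, Complex.norm_real]

lemma norm_exp_neg_I_mul (x y : ℝ) : ‖Complex.exp (-Complex.I * x * y)‖ = 1 := by
  have h : -Complex.I * (x:ℂ) * (y:ℂ) = ((-(x*y) : ℝ) : ℂ) * Complex.I := by
    push_cast; ring
  rw [h, Complex.norm_exp_ofReal_mul_I]

/-- `‖ℛ(t) f‖_{L^∞} ≲ |t|^{-(1/2+θ)} ‖f‖_{H^{s+2θ}}` for `s > 1/2`, `0 ≤ θ ≤ 1`, `|t| ≥ 1`. -/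
theorem stmt3 (s θ : ℝ) (hs : 1/2 < s) (hθ0 : 0 ≤ θ) (hθ1 : θ ≤ 1) :
    ∃ C > (0:ℝ), ∀ t : ℝ, 1 ≤ |t| → ∀ f : SchwartzMap ℝ ℂ,
      eLpNorm (Rop t f) ∞ volume
        ≤ ENNReal.ofReal (C * |t| ^ (-(1/2 + θ))) * HsNorm (s + 2 * θ) f := by
  have hc0pos : (0:ℝ) < (2 * Real.pi) ^ (-(1:ℝ)/2) := Real.rpow_pos_of_pos (by positivity) _
  set c0 : ℝ := (2 * Real.pi) ^ (-(1:ℝ)/2) with hc0def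
  have hKint : Integrable (fun x : ℝ => ((1:ℝ) + x^2) ^ (-s)) := by
    have h12 : ((Module.finrank ℝ ℝ : ℝ)) < 2*s := by
      rw [Module.finrank_self]; push_cast; linarith
    have h := integrable_rpow_neg_one_add_norm_sq (E := ℝ) (μ := volume) h12
    have heq : (fun x : ℝ => ((1:ℝ) + x^2) ^ (-s))
        = fun x : ℝ => ((1:ℝ) + ‖x‖^2) ^ (-(2*s)/2) := by
      funext x
      rw [Real.norm_eq_abs, _root_.sq_abs]
      congr 1
      ring
    rw [heq]
    exact h
  set Ks : ℝ := ∫ x : ℝ, ((1:ℝ)+x^2)^(-s) with hKsdef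
  have hKs0 : 0 ≤ Ks := integral_nonneg (fun x => by positivity)
  set C0 : ℝ := c0 * 2^(1-θ) * 2^(-θ) * Ks ^ ((1:ℝ)/2) with hC0def
  have hC00 : 0 ≤ C0 := by positivity
  refine ⟨C0 + 1, by positivity, ?_⟩
  intro t ht f
  have ht0 : (0:ℝ) < |t| := lt_of_lt_of_le one_pos ht
  have htne : t ≠ 0 := fun hteq => by simp [hteq] at ht0
  set h : ℝ → ℂ := FTinv ⇑f with hhdef
  have hcont : Continuous h := continuous_FTinv f
  set g : ℝ → ℂ := fun x => (Complex.exp (Complex.I * (x:ℂ) ^ 2 / (2 * (t:ℂ))) - 1) * h x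
    with hgdef
  -- Step A : bound L^∞ norm by the L¹ norm of g
  have hFTg : ∀ y : ℝ, (‖FT g y‖₊ : ℝ≥0∞) ≤ ENNReal.ofReal c0 * ∫⁻ z, (‖g z‖₊ : ℝ≥0∞) := by
    intro y
    have hFT : FT g y = ((c0:ℝ):ℂ) * ∫ z : ℝ, g z * Complex.exp (-Complex.I * z * y) := rfl
    rw [hFT, nnnorm_mul, ENNReal.coe_mul]
    have hcc : ((‖((c0:ℝ):ℂ)‖₊ : ℝ≥0) : ℝ≥0∞) = ENNReal.ofReal c0 := by
      rw [← ofReal_norm_eq_coe_nnnorm, Complex.norm_real, Real.norm_eq_abs,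
        _root_.abs_of_pos hc0pos]
    rw [hcc]
    refine mul_le_mul_right ?_ _
    refine (enorm_integral_le_lintegral_enorm _).trans_eq ?_
    apply lintegral_congr
    intro z
    simp only [enorm_eq_nnnorm]
    rw [← ofReal_norm_eq_coe_nnnorm, ← ofReal_norm_eq_coe_nnnorm, norm_mul,
      norm_exp_neg_I_mul, mul_one]
  have stepA : eLpNorm (Rop t ⇑f) ∞ volume ≤
      (ENNReal.ofReal (|t| ^ (-(1/2) : ℝ)) * ENNReal.ofReal c0) * ∫⁻ z, (‖g z‖₊ : ℝ≥0∞) := by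
    rw [eLpNorm_exponent_top, eLpNormEssSup]
    refine essSup_le_of_ae_le _ ?_
    filter_upwards with x
    have hRx : Rop t ⇑f x =
        Complex.exp (Complex.I * (x:ℂ)^2 / (2*(t:ℂ))) *
          ((Complex.I * (t:ℂ)) ^ (-(1/2 : ℂ)) * FT g (x/t)) := rfl
    rw [hRx, enorm_eq_nnnorm, nnnorm_mul, nnnorm_mul, ENNReal.coe_mul, ENNReal.coe_mul]
    have h1 : (‖Complex.exp (Complex.I * (x:ℂ)^2 / (2*(t:ℂ)))‖₊ : ℝ≥0∞) = 1 := by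
      rw [← ofReal_norm_eq_coe_nnnorm, norm_exp_quad htne]
      simp
    have h2 : (‖(Complex.I * (t:ℂ)) ^ (-(1/2 : ℂ))‖₊ : ℝ≥0∞)
        = ENNReal.ofReal (|t| ^ (-(1/2):ℝ)) := by
      rw [← ofReal_norm_eq_coe_nnnorm, norm_cpow_It htne]
    rw [h1, one_mul, h2, mul_assoc]
    exact mul_le_mul_right (hFTg (x/t)) _
  -- Step B : pointwise bound on g
  have stepB : (∫⁻ z, (‖g z‖₊ : ℝ≥0∞)) ≤
      ENNReal.ofReal ((2:ℝ)^(1-θ) * (2*|t|)^(-θ)) *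
        ∫⁻ x, ENNReal.ofReal (|x| ^ (2*θ)) * (‖h x‖₊ : ℝ≥0∞) := by
    rw [← lintegral_const_mul' _ _ ENNReal.ofReal_ne_top]
    apply lintegral_mono
    intro x
    have hb : ‖Complex.exp (Complex.I * (x:ℂ)^2/(2*(t:ℂ))) - 1‖
        ≤ (2:ℝ)^(1-θ) * (2*|t|)^(-θ) * |x|^(2*θ) := by
      rw [arg_exp_quad htne]
      refine (aux_exp_interp hθ0 hθ1 (x^2/(2*t))).trans ?_
      have habs : |x^2/(2*t)| = x^2 / (2*|t|) := by
        rw [abs_div, _root_.abs_of_nonneg (sq_nonneg x), abs_mul]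
        norm_num
      rw [habs]
      have hxx : (x^2 / (2*|t|)) ^ θ = |x|^(2*θ) * (2*|t|)^(-θ) := by
        rw [Real.div_rpow (sq_nonneg x) (by positivity), Real.rpow_neg (by positivity),
          div_eq_mul_inv]
        congr 1
        rw [← _root_.sq_abs, ← Real.rpow_natCast |x| 2, ← Real.rpow_mul (abs_nonneg x)]
        norm_num [mul_comm]
      rw [hxx]
      exact le_of_eq (by ring)
    have hnorm : ‖g x‖ ≤ ((2:ℝ)^(1-θ) * (2*|t|)^(-θ)) * (|x| ^ (2*θ) * ‖h x‖) := by
      rw [hgdef]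
      simp only []
      rw [norm_mul]
      calc ‖Complex.exp (Complex.I * (x:ℂ)^2/(2*(t:ℂ))) - 1‖ * ‖h x‖
          ≤ ((2:ℝ)^(1-θ) * (2*|t|)^(-θ) * |x|^(2*θ)) * ‖h x‖ :=
            mul_le_mul_of_nonneg_right hb (norm_nonneg _)
        _ = ((2:ℝ)^(1-θ) * (2*|t|)^(-θ)) * (|x| ^ (2*θ) * ‖h x‖) := by ring
    calc (‖g x‖₊ : ℝ≥0∞) = ENNReal.ofReal ‖g x‖ := (ofReal_norm_eq_coe_nnnorm _).symm
      _ ≤ ENNReal.ofReal (((2:ℝ)^(1-θ) * (2*|t|)^(-θ)) * (|x| ^ (2*θ) * ‖h x‖)) :=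
          ENNReal.ofReal_le_ofReal hnorm
      _ = ENNReal.ofReal ((2:ℝ)^(1-θ) * (2*|t|)^(-θ)) *
            (ENNReal.ofReal (|x| ^ (2*θ)) * (‖h x‖₊ : ℝ≥0∞)) := by
          rw [ENNReal.ofReal_mul (by positivity : (0:ℝ) ≤ (2:ℝ)^(1-θ) * (2*|t|)^(-θ)),
            ENNReal.ofReal_mul (by positivity : (0:ℝ) ≤ |x| ^ (2*θ)),
            ofReal_norm_eq_coe_nnnorm]
  -- Step C : Cauchy–Schwarz
  have hpq : Real.HolderConjugate 2 2 := Real.HolderConjugate.two_two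
  set u : ℝ → ℝ≥0∞ := fun x => ENNReal.ofReal (((1:ℝ)+x^2) ^ (-s/2)) with hudef
  set v : ℝ → ℝ≥0∞ :=
    fun x => ENNReal.ofReal (((1:ℝ)+x^2) ^ (s/2) * |x| ^ (2*θ)) * (‖h x‖₊ : ℝ≥0∞) with hvdef
  have hu : AEMeasurable u volume := by
    apply Measurable.aemeasurable
    apply Measurable.ennreal_ofReal
    exact (Continuous.rpow_const (by fun_prop) (fun x => Or.inl (by positivity))).measurable
  have hcrpow1 : Continuous fun x : ℝ => ((1:ℝ)+x^2) ^ (s/2) :=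
    Continuous.rpow_const (by fun_prop) (fun x => Or.inl (by positivity))
  have hcrpow2 : Continuous fun x : ℝ => |x| ^ (2*θ) :=
    Continuous.rpow_const continuous_abs (fun x => Or.inr (by positivity))
  have hv : AEMeasurable v volume := by
    apply Measurable.aemeasurable
    exact ((hcrpow1.mul hcrpow2).measurable.ennreal_ofReal).mul hcont.measurable.nnnorm.coe_nnreal_ennreal
  have hpoint : ∀ x : ℝ,
      ENNReal.ofReal (|x| ^ (2*θ)) * (‖h x‖₊ : ℝ≥0∞) = u x * v x := by
    intro x
    simp only [hudef, hvdef]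
    have hab : ((1:ℝ)+x^2)^(-s/2) * (((1:ℝ)+x^2)^(s/2) * |x|^(2*θ)) = |x|^(2*θ) := by
      rw [← mul_assoc, ← Real.rpow_add (by positivity : (0:ℝ) < 1+x^2)]
      have hz : -s/2 + s/2 = 0 := by ring
      rw [hz, Real.rpow_zero, one_mul]
    calc ENNReal.ofReal (|x| ^ (2*θ)) * (‖h x‖₊ : ℝ≥0∞)
        = ENNReal.ofReal (((1:ℝ)+x^2)^(-s/2) * (((1:ℝ)+x^2)^(s/2) * |x|^(2*θ)))
            * (‖h x‖₊ : ℝ≥0∞) := by rw [hab]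
      _ = u x * v x := by
          rw [ENNReal.ofReal_mul (by positivity), mul_assoc]
  have holder := ENNReal.lintegral_mul_le_Lp_mul_Lq volume hpq hu hv
  have hIu : (∫⁻ x, u x ^ (2:ℝ)) = ENNReal.ofReal Ks := by
    have hux : ∀ x : ℝ, u x ^ (2:ℝ) = ENNReal.ofReal (((1:ℝ)+x^2)^(-s)) := by
      intro x
      simp only [hudef]
      rw [ENNReal.ofReal_rpow_of_pos (by positivity)]
      congr 1
      rw [← Real.rpow_mul (by positivity)]
      congr 1
      ring
    rw [lintegral_congr hux]
    rw [← ofReal_integral_eq_lintegral_ofReal hKint (ae_of_all _ fun x => by positivity)]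
  have hIv : (∫⁻ x, v x ^ (2:ℝ)) ≤
      ∫⁻ x, ENNReal.ofReal (((1:ℝ)+x^2)^(s+2*θ)) * (‖h x‖₊ : ℝ≥0∞) ^ (2:ℝ) := by
    apply lintegral_mono
    intro x
    simp only [hvdef]
    rw [ENNReal.mul_rpow_of_nonneg _ _ (by norm_num : (0:ℝ) ≤ 2)]
    gcongr
    rw [ENNReal.ofReal_rpow_of_nonneg (by positivity) (by norm_num)]
    apply ENNReal.ofReal_le_ofReal
    have hsplit : ((((1:ℝ)+x^2) ^ (s/2)) * |x| ^ (2*θ)) ^ (2:ℝ)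
        = ((1:ℝ)+x^2) ^ s * (x^2) ^ (2*θ) := by
      rw [Real.mul_rpow (by positivity) (by positivity)]
      congr 1
      · rw [← Real.rpow_mul (by positivity)]
        congr 1
        ring
      · rw [← Real.rpow_mul (abs_nonneg x), ← _root_.sq_abs x, ← Real.rpow_natCast |x| 2,
          ← Real.rpow_mul (abs_nonneg x)]
        congr 1
        push_cast
        ring
    rw [hsplit]
    calc ((1:ℝ)+x^2) ^ s * (x^2) ^ (2*θ)
        ≤ ((1:ℝ)+x^2) ^ s * ((1:ℝ)+x^2) ^ (2*θ) :=
          mul_le_mul_of_nonneg_left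
            (Real.rpow_le_rpow (sq_nonneg x) (by linarith [sq_nonneg x]) (by positivity))
            (by positivity)
      _ = ((1:ℝ)+x^2) ^ (s+2*θ) := (Real.rpow_add (by positivity) _ _).symm
  -- identify the H^s norm
  have hDint : (∫⁻ x, ENNReal.ofReal (((1:ℝ)+x^2)^(s+2*θ)) * (‖h x‖₊ : ℝ≥0∞) ^ (2:ℝ))
      ^ ((1:ℝ)/2) = HsNorm (s + 2*θ) ⇑f := by
    rw [HsNorm, eLpNorm_eq_lintegral_rpow_enorm_toReal (by norm_num) (by norm_num)]
    have htr : ((2:ℝ≥0∞)).toReal = (2:ℝ) := by norm_num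
    rw [htr]
    congr 1
    · have hFend : ∀ ξ : ℝ,
          (‖((((1:ℝ) + ξ^2) ^ ((s+2*θ)/2) : ℝ) : ℂ) * FT ⇑f ξ‖₊ : ℝ≥0∞) ^ (2:ℝ)
          = ENNReal.ofReal (((1:ℝ)+ξ^2)^(s+2*θ)) * (‖FT ⇑f ξ‖₊ : ℝ≥0∞) ^ (2:ℝ) := by
        intro ξ
        rw [nnnorm_mul, ENNReal.coe_mul, ENNReal.mul_rpow_of_nonneg _ _ (by norm_num : (0:ℝ) ≤ 2)]
        congr 1
        rw [← ofReal_norm_eq_coe_nnnorm, Complex.norm_real, Real.norm_eq_abs,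
          _root_.abs_of_pos (by positivity), ENNReal.ofReal_rpow_of_nonneg (by positivity) (by norm_num)]
        congr 1
        rw [← Real.rpow_mul (by positivity)]
        congr 1
        ring
      have hhFT : ∀ x : ℝ, h x = FT ⇑f (-x) := fun x => FTinv_eq_FT_neg ⇑f x
      set F : ℝ → ℝ≥0∞ :=
        fun ξ => ENNReal.ofReal (((1:ℝ)+ξ^2)^(s+2*θ)) * (‖FT ⇑f ξ‖₊ : ℝ≥0∞) ^ (2:ℝ) with hFdef
      have hleft : ∀ x : ℝ,
          ENNReal.ofReal (((1:ℝ)+x^2)^(s+2*θ)) * (‖h x‖₊ : ℝ≥0∞) ^ (2:ℝ) = F (-x) := by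
        intro x
        rw [hFdef, hhFT x]
        norm_num
      simp only [enorm_eq_nnnorm]
      rw [lintegral_congr hleft, lintegral_congr hFend]
      have hmap : (∫⁻ ξ, F ξ ∂(Measure.map (⇑(MeasurableEquiv.neg ℝ)) (volume : Measure ℝ)))
          = ∫⁻ x, F (-x) := by
        rw [lintegral_map_equiv F (MeasurableEquiv.neg ℝ)]
        rfl
      have hmeq : Measure.map (⇑(MeasurableEquiv.neg ℝ)) (volume : Measure ℝ) = volume := by
        have hco : ⇑(MeasurableEquiv.neg ℝ) = (Neg.neg : ℝ → ℝ) := rfl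
        rw [hco, Measure.map_neg_eq_self]
      rw [hmeq] at hmap
      exact hmap.symm
  have stepC : (∫⁻ x, ENNReal.ofReal (|x| ^ (2*θ)) * (‖h x‖₊ : ℝ≥0∞))
      ≤ ENNReal.ofReal (Ks ^ ((1:ℝ)/2)) * HsNorm (s + 2*θ) ⇑f := by
    have h1 : (∫⁻ x, ENNReal.ofReal (|x| ^ (2*θ)) * (‖h x‖₊ : ℝ≥0∞)) = ∫⁻ x, (u * v) x :=
      lintegral_congr (fun x => by rw [hpoint x]; rfl)
    rw [h1]
    refine holder.trans ?_
    rw [hIu]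
    have h2 : (ENNReal.ofReal Ks) ^ ((1:ℝ)/2) = ENNReal.ofReal (Ks ^ ((1:ℝ)/2)) :=
      ENNReal.ofReal_rpow_of_nonneg hKs0 (by norm_num)
    rw [h2]
    refine mul_le_mul_right ?_ _
    rw [← hDint]
    exact ENNReal.rpow_le_rpow hIv (by norm_num)
  have e1 : ENNReal.ofReal (|t| ^ (-(1/2):ℝ) * c0 * ((2:ℝ)^(1-θ) * (2*|t|)^(-θ))
        * Ks ^ ((1:ℝ)/2))
      = ENNReal.ofReal (|t| ^ (-(1/2):ℝ)) * ENNReal.ofReal c0 *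
        (ENNReal.ofReal ((2:ℝ)^(1-θ) * (2*|t|)^(-θ)) * ENNReal.ofReal (Ks ^ ((1:ℝ)/2))) := by
    rw [ENNReal.ofReal_mul (by positivity), ENNReal.ofReal_mul (by positivity),
      ENNReal.ofReal_mul (by positivity)]
    ring
  have hre : |t| ^ (-(1/2):ℝ) * c0 * ((2:ℝ)^(1-θ) * (2*|t|)^(-θ)) * Ks ^ ((1:ℝ)/2)
      ≤ (C0 + 1) * |t| ^ (-(1/2 + θ)) := by
    have key : ((2*|t|):ℝ)^(-θ) = 2^(-θ) * |t|^(-θ) := Real.mul_rpow (by norm_num) ht0.le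
    have key2 : |t|^(-(1/2):ℝ) * |t|^(-θ) = |t|^(-(1/2+θ)) := by
      rw [← Real.rpow_add ht0]
      congr 1
      ring
    have hEq : |t| ^ (-(1/2):ℝ) * c0 * ((2:ℝ)^(1-θ) * (2*|t|)^(-θ)) * Ks ^ ((1:ℝ)/2)
        = C0 * |t| ^ (-(1/2+θ)) := by
      rw [key, hC0def, ← key2]
      ring
    rw [hEq]
    have hw : (0:ℝ) ≤ |t| ^ (-(1/2+θ)) := Real.rpow_nonneg ht0.le _
    nlinarith
  calc eLpNorm (Rop t ⇑f) ∞ volume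
      ≤ ENNReal.ofReal (|t| ^ (-(1/2):ℝ)) * ENNReal.ofReal c0 * ∫⁻ z, (‖g z‖₊ : ℝ≥0∞) := stepA
    _ ≤ ENNReal.ofReal (|t| ^ (-(1/2):ℝ)) * ENNReal.ofReal c0 *
          (ENNReal.ofReal ((2:ℝ)^(1-θ) * (2*|t|)^(-θ)) *
            (ENNReal.ofReal (Ks ^ ((1:ℝ)/2)) * HsNorm (s + 2*θ) ⇑f)) :=
        mul_le_mul_right (stepB.trans (mul_le_mul_right stepC _)) _
    _ = ENNReal.ofReal (|t| ^ (-(1/2):ℝ) * c0 * ((2:ℝ)^(1-θ) * (2*|t|)^(-θ))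
          * Ks ^ ((1:ℝ)/2)) * HsNorm (s + 2*θ) ⇑f := by
        rw [e1]
        ring
    _ ≤ ENNReal.ofReal ((C0 + 1) * |t| ^ (-(1/2 + θ))) * HsNorm (s + 2*θ) ⇑f :=
        mul_le_mul_left (ENNReal.ofReal_le_ofReal hre) _

end
end

section
/- Let ℛ(t) = M(t)D(t)ℱ(M(t)−1)ℱ^{-1}. For all θ with 0 ≤ θ ≤ 1, there is a constant C such that for all |t| ≥ 1 and all Schwartz functions f on ℝ, ‖ℛ(t)f‖_{L²(ℝ)} ≤ C |t|^{−θ} ‖f‖_{H^{2θ}(ℝ)}. -/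
open MeasureTheory Complex Filter
open scoped ENNReal Real Topology

noncomputable section


section auxlemmas
open FourierTransform SchwartzMap
open scoped ContDiff


lemma poly_bound (p : Polynomial ℂ) :
    ∃ (k : ℕ) (C : ℝ), ∀ x : ℝ, ‖p.eval (x:ℂ)‖ ≤ C * (1 + ‖x‖) ^ k := by
  refine ⟨p.natDegree, ∑ i ∈ Finset.range (p.natDegree+1), ‖p.coeff i‖, fun x => ?_⟩
  rw [Polynomial.eval_eq_sum_range, Finset.sum_mul]
  refine (norm_sum_le _ _).trans (Finset.sum_le_sum fun i hi => ?_)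
  rw [norm_mul]
  have h1 : ‖(x:ℂ)^i‖ = ‖x‖^i := by rw [norm_pow, Complex.norm_real]
  have h2 : ‖x‖^i ≤ (1 + ‖x‖)^p.natDegree := by
    calc ‖x‖^i ≤ (1 + ‖x‖)^i :=
          pow_le_pow_left₀ (norm_nonneg x) (by linarith [norm_nonneg x]) i
      _ ≤ (1 + ‖x‖)^p.natDegree := by
          apply pow_le_pow_right₀ (by linarith [norm_nonneg x])
          exact Nat.lt_succ_iff.mp (Finset.mem_range.mp hi)
  rw [h1]
  exact mul_le_mul_of_nonneg_left h2 (norm_nonneg _)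

lemma expquad_deriv (c : ℂ) (x : ℝ) :
    HasDerivAt (fun x : ℝ => Complex.exp (c * (x:ℂ)^2))
      (2*c*(x:ℂ) * Complex.exp (c * (x:ℂ)^2)) x := by
  have h0 : HasDerivAt (fun y : ℝ => ((y:ℂ)^2)) (2*(x:ℂ)) x := by
    simpa using (hasDerivAt_pow 2 ((x : ℝ) : ℂ)).comp_ofReal
  have := (h0.const_mul c).cexp
  convert this using 1
  ring

lemma expquad_iteratedDeriv (c : ℂ) (n : ℕ) :
    ∃ p : Polynomial ℂ, ∀ x : ℝ,
      iteratedDeriv n (fun x : ℝ => Complex.exp (c * (x:ℂ)^2)) x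
        = p.eval (x:ℂ) * Complex.exp (c * (x:ℂ)^2) := by
  induction n with
  | zero => exact ⟨1, by simp⟩
  | succ n ih =>
    obtain ⟨p, hp⟩ := ih
    refine ⟨p.derivative + Polynomial.C (2*c) * (Polynomial.X * p), fun x => ?_⟩
    rw [iteratedDeriv_succ, funext hp]
    have hd : HasDerivAt (fun y : ℝ => p.eval (y:ℂ) * Complex.exp (c*(y:ℂ)^2))
        (p.derivative.eval (x:ℂ) * Complex.exp (c*(x:ℂ)^2)
          + p.eval (x:ℂ) * (2*c*(x:ℂ) * Complex.exp (c*(x:ℂ)^2))) x :=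
      ((Polynomial.hasDerivAt p ((x:ℝ):ℂ)).comp_ofReal).mul (expquad_deriv c x)
    rw [hd.deriv]
    simp only [Polynomial.eval_add, Polynomial.eval_mul, Polynomial.eval_C, Polynomial.eval_X]
    ring

lemma expquad_smooth (c : ℂ) : ContDiff ℝ (∞ : WithTop ℕ∞) (fun x : ℝ => Complex.exp (c * (x:ℂ)^2)) := by
  apply (Complex.contDiff_exp (𝕜 := ℝ)).comp
  exact contDiff_const.mul (Complex.ofRealCLM.contDiff.pow 2)

lemma norm_expquad (c : ℂ) (hc : c.re = 0) (x : ℝ) : ‖Complex.exp (c * (x:ℂ)^2)‖ = 1 := by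
  rw [Complex.norm_exp]
  have h : (c * (x:ℂ)^2).re = 0 := by
    rw [Complex.mul_re, hc]
    simp [← Complex.ofReal_pow]
  rw [h, Real.exp_zero]

lemma expquad_tg (c : ℂ) (hc : c.re = 0) :
    Function.HasTemperateGrowth (fun x : ℝ => Complex.exp (c * (x:ℂ)^2)) := by
  refine ⟨expquad_smooth c, fun n => ?_⟩
  obtain ⟨p, hp⟩ := expquad_iteratedDeriv c n
  obtain ⟨k, C, hC⟩ := poly_bound p
  refine ⟨k, C, fun x => ?_⟩
  rw [norm_iteratedFDeriv_eq_norm_iteratedDeriv, hp x, norm_mul, norm_expquad c hc, mul_one]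
  exact hC x


lemma FT_eq (h : ℝ → ℂ) (ξ : ℝ) :
    FT h ξ = (((2 * Real.pi) ^ (-(1:ℝ)/2) : ℝ) : ℂ) * 𝓕 h (ξ / (2 * Real.pi)) := by
  rw [FT, Real.fourier_real_eq_integral_exp_smul]
  congr 1
  refine integral_congr_ae (Eventually.of_forall fun v => ?_)
  simp only [smul_eq_mul]
  rw [mul_comm]
  congr 1
  have : (-2 * π * v * (ξ / (2 * π))) = -(v * ξ) := by
    field_simp
  rw [this]
  congr 1
  push_cast
  ring

lemma FTinv_eq (h : ℝ → ℂ) (x : ℝ) : FTinv h x = FT h (-x) := by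
  rw [FTinv, FT]
  congr 1
  refine integral_congr_ae (Eventually.of_forall fun ξ => ?_)
  congr 1
  push_cast
  ring

lemma fourier_conj (h : ℝ → ℂ) (ξ : ℝ) :
    𝓕 (fun x => (starRingEnd ℂ) (h x)) ξ = (starRingEnd ℂ) (𝓕 h (-ξ)) := by
  rw [Real.fourier_real_eq_integral_exp_smul, Real.fourier_real_eq_integral_exp_smul,
    ← integral_conj]
  refine integral_congr_ae (Eventually.of_forall fun v => ?_)
  simp only [smul_eq_mul, map_mul, ← Complex.exp_conj, map_neg, Complex.conj_I,
    Complex.conj_ofReal]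
  congr 2
  push_cast
  ring

lemma memL2 (φ : 𝓢(ℝ, ℂ)) : MemLp (⇑φ) 2 volume := by
  exact φ.memLp 2

lemma planch_core (φ : 𝓢(ℝ, ℂ)) :
    ∫ ξ, ‖𝓕 (⇑φ) ξ‖^2 = ∫ x, ‖φ x‖^2 := by
  set F : 𝓢(ℝ, ℂ) := fourierTransformCLM ℂ φ with hF
  have hFapp : ⇑F = 𝓕 (⇑φ) := by rw [hF, fourierTransformCLM_apply, SchwartzMap.fourier_coe]
  have hψint : Integrable (fun ξ => (starRingEnd ℂ) (𝓕 (⇑φ) ξ)) volume := by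
    rw [← hFapp]
    exact ((Complex.conjCLE : ℂ ≃L[ℝ] ℂ).toContinuousLinearMap).integrable_comp F.integrable
  have hflip : (innerₗ ℝ).flip = innerₗ ℝ := by
    apply LinearMap.ext; intro x; apply LinearMap.ext; intro y
    simp only [LinearMap.flip_apply]
    exact real_inner_comm x y
  have key := VectorFourier.integral_fourierIntegral_smul_eq_flip
    (e := Real.fourierChar) (L := innerₗ ℝ) (μ := volume) (ν := volume)
    Real.continuous_fourierChar continuous_inner φ.integrable hψint
  rw [hflip] at key
  have hR : ∀ x, VectorFourier.fourierIntegral Real.fourierChar volume (innerₗ ℝ)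
      (fun ξ => (starRingEnd ℂ) (𝓕 (⇑φ) ξ)) x = (starRingEnd ℂ) (φ x) := by
    intro x
    have h1 : VectorFourier.fourierIntegral Real.fourierChar volume (innerₗ ℝ)
        (fun ξ => (starRingEnd ℂ) (𝓕 (⇑φ) ξ)) x
        = 𝓕 (fun ξ => (starRingEnd ℂ) (𝓕 (⇑φ) ξ)) x := rfl
    rw [h1, fourier_conj, ← Real.fourierInv_eq_fourier_neg]
    congr 1
    exact φ.integrable.fourierInv_fourier_eq (hFapp ▸ F.integrable) φ.continuous.continuousAt
  have key2 : ∫ ξ, (𝓕 (⇑φ) ξ) * (starRingEnd ℂ) (𝓕 (⇑φ) ξ)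
      = ∫ x, φ x * (starRingEnd ℂ) (φ x) := by
    have h2 : ∫ x, φ x • VectorFourier.fourierIntegral Real.fourierChar volume (innerₗ ℝ)
        (fun ξ => (starRingEnd ℂ) (𝓕 (⇑φ) ξ)) x = ∫ x, φ x * (starRingEnd ℂ) (φ x) :=
      integral_congr_ae (Eventually.of_forall fun x => by simp only [smul_eq_mul, hR x])
    exact key.trans h2
  have hL2 : ∫ ξ, (𝓕 (⇑φ) ξ) * (starRingEnd ℂ) (𝓕 (⇑φ) ξ)
      = ((∫ ξ, ‖𝓕 (⇑φ) ξ‖^2 : ℝ) : ℂ) := by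
    refine Eq.trans ?_ integral_ofReal
    refine integral_congr_ae (Eventually.of_forall fun ξ => ?_)
    simp only [Complex.mul_conj']
    norm_cast
  have hR2 : ∫ x, φ x * (starRingEnd ℂ) (φ x) = ((∫ x, ‖φ x‖^2 : ℝ) : ℂ) := by
    refine Eq.trans ?_ integral_ofReal
    refine integral_congr_ae (Eventually.of_forall fun x => ?_)
    simp only [Complex.mul_conj']
    norm_cast
  have := hL2.symm.trans (key2.trans hR2)
  exact_mod_cast this

lemma planch (φ : 𝓢(ℝ, ℂ)) :
    eLpNorm (𝓕 (⇑φ)) 2 volume = eLpNorm (⇑φ) 2 volume := by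
  have hF : ⇑(fourierTransformCLM ℂ φ) = 𝓕 (⇑φ) := (congrArg (⇑) (fourierTransformCLM_apply ℂ φ)).trans (SchwartzMap.fourier_coe φ)
  rw [← hF, (memL2 (fourierTransformCLM ℂ φ)).eLpNorm_eq_integral_rpow_norm (by norm_num) (by norm_num),
    (memL2 φ).eLpNorm_eq_integral_rpow_norm (by norm_num) (by norm_num)]
  congr 2
  have h2 : ((2:ℝ≥0∞).toReal) = ((2:ℕ):ℝ) := by norm_num
  simp only [h2, Real.rpow_natCast]
  rw [hF]
  exact planch_core φ




lemma lint_comp_div (F : ℝ → ℝ≥0∞) (hF : Measurable F) {t : ℝ} (ht : t ≠ 0) :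
    ∫⁻ x : ℝ, F (x / t) = ENNReal.ofReal |t| * ∫⁻ y : ℝ, F y := by
  have h1 : (fun x : ℝ => F (x / t)) = fun x : ℝ => F (t⁻¹ * x) := by
    funext x; rw [div_eq_inv_mul]
  rw [h1, ← lintegral_map hF (measurable_const_mul t⁻¹),
    Real.map_volume_mul_left (inv_ne_zero ht), inv_inv, lintegral_smul_measure, smul_eq_mul]

lemma eLp_comp_div (u : ℝ → ℂ) (hu : Continuous u) {t : ℝ} (ht : t ≠ 0) :
    eLpNorm (fun x => u (x / t)) 2 volume
      = ENNReal.ofReal (|t| ^ ((1:ℝ)/2)) * eLpNorm u 2 volume := by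
  rw [eLpNorm_eq_lintegral_rpow_enorm_toReal (by norm_num) (by norm_num),
      eLpNorm_eq_lintegral_rpow_enorm_toReal (by norm_num) (by norm_num)]
  have h2 : ((2:ℝ≥0∞).toReal) = ((2:ℕ):ℝ) := by norm_num
  simp only [h2, ENNReal.rpow_natCast]
  have hFm : Measurable fun y : ℝ => (‖u y‖ₑ) ^ (2:ℕ) :=
    (hu.measurable.enorm).pow_const 2
  have key : ∫⁻ x : ℝ, (‖u (x / t)‖ₑ) ^ (2:ℕ)
      = ENNReal.ofReal |t| * ∫⁻ y : ℝ, (‖u y‖ₑ) ^ (2:ℕ) :=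
    lint_comp_div _ hFm ht
  rw [key, ENNReal.mul_rpow_of_nonneg _ _ (by norm_num : (0:ℝ) ≤ 1 / ((2:ℕ):ℝ)),
    ENNReal.ofReal_rpow_of_pos (abs_pos.mpr ht)]
  norm_num

lemma exp_sub_one_bound {θ : ℝ} (hθ0 : 0 ≤ θ) (hθ1 : θ ≤ 1) (a : ℝ) :
    ‖Complex.exp (Complex.I * a) - 1‖ ≤ 2 * |a| ^ θ := by
  have habs : ‖Complex.I * a‖ = |a| := by
    rw [norm_mul, Complex.norm_I, Complex.norm_real, Real.norm_eq_abs, one_mul]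
  rcases eq_or_ne a 0 with rfl | ha0
  · simp only [Complex.ofReal_zero, mul_zero, Complex.exp_zero, sub_self, norm_zero]
    positivity
  rcases le_or_gt (|a|) 1 with h | h
  · have h1 : ‖Complex.exp (Complex.I * a) - 1‖ ≤ 2 * |a| := by
      have := Complex.norm_exp_sub_one_le (x := Complex.I * a) (by rw [habs]; exact h)
      rw [habs] at this
      exact this
    refine h1.trans ?_
    have : |a| ≤ |a| ^ θ := by
      calc |a| = |a| ^ (1:ℝ) := (Real.rpow_one _).symm
        _ ≤ |a| ^ θ := Real.rpow_le_rpow_of_exponent_ge (abs_pos.mpr ha0) h hθ1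
    linarith
  · have h1 : ‖Complex.exp (Complex.I * a) - 1‖ ≤ 2 := by
      refine (norm_sub_le _ _).trans ?_
      have : ‖Complex.exp (Complex.I * a)‖ = 1 := by
        rw [Complex.norm_exp]
        have : (Complex.I * a).re = 0 := by simp
        rw [this, Real.exp_zero]
      rw [this, norm_one]
      norm_num
    refine h1.trans ?_
    have : (1:ℝ) ≤ |a| ^ θ := by
      calc (1:ℝ) = 1 ^ θ := (Real.one_rpow θ).symm
        _ ≤ |a| ^ θ := Real.rpow_le_rpow zero_le_one h.le hθ0
    linarith


end auxlemmas

open FourierTransform SchwartzMap in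
/-- `‖ℛ(t) f‖_{L²} ≲ |t|^{-θ} ‖f‖_{H^{2θ}}` for `0 ≤ θ ≤ 1`, `|t| ≥ 1`. -/
theorem stmt4 (θ : ℝ) (hθ0 : 0 ≤ θ) (hθ1 : θ ≤ 1) :
    ∃ C > (0:ℝ), ∀ t : ℝ, 1 ≤ |t| → ∀ f : SchwartzMap ℝ ℂ,
      eLpNorm (Rop t f) 2 volume
        ≤ ENNReal.ofReal (C * |t| ^ (-θ)) * HsNorm (2 * θ) f := by
  refine ⟨2, by norm_num, fun t ht f => ?_⟩
  have htpos : (0:ℝ) < |t| := lt_of_lt_of_le one_pos ht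
  have ht0 : t ≠ 0 := abs_pos.mp htpos
  set c : ℂ := ((1/(2*t) : ℝ) : ℂ) * Complex.I with hcdef
  have hcre : c.re = 0 := by simp [hcdef]
  have hm : ∀ x : ℝ, Complex.I * (x:ℂ)^2 / (2*(t:ℂ)) = c * (x:ℂ)^2 := by
    intro x
    rw [hcdef]
    have h2t : (t:ℂ) ≠ 0 := by exact_mod_cast ht0
    push_cast
    field_simp
  have hπ : (0:ℝ) < 2*Real.pi := by positivity
  set a : ℝ := -(2*Real.pi)⁻¹ with hadef
  have ha0 : a ≠ 0 := by
    rw [hadef]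
    simp [Real.pi_ne_zero]
  set Φ : SchwartzMap ℝ ℂ :=
    ((2*Real.pi) ^ (-(1:ℝ)/2) : ℝ) •
      (SchwartzMap.compCLMOfContinuousLinearEquiv ℝ
        (ContinuousLinearEquiv.unitsEquivAut ℝ (Units.mk0 a ha0)) (fourierTransformCLM ℂ f))
    with hΦdef
  have hΦ : ∀ x : ℝ, Φ x = FTinv (⇑f) x := by
    intro x
    have h1 : Φ x = ((2*Real.pi) ^ (-(1:ℝ)/2) : ℝ) • (𝓕 (⇑f) (x * a)) := rfl
    rw [h1, FTinv_eq, FT_eq, Complex.real_smul]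
    congr 2
    rw [hadef]
    ring
  set G : SchwartzMap ℝ ℂ :=
    SchwartzMap.bilinLeftCLM (ContinuousLinearMap.mul ℝ ℂ) (expquad_tg c hcre) Φ - Φ with hGdef
  have hG : ∀ x : ℝ, G x
      = (Complex.exp (Complex.I * (x:ℂ)^2 / (2*(t:ℂ))) - 1) * FTinv (⇑f) x := by
    intro x
    have h1 : G x = Φ x * Complex.exp (c * (x:ℂ)^2) - Φ x := rfl
    rw [h1, hΦ, hm]
    ring
  have hRop : Rop t ⇑f = Mop t (Dop t (FT ⇑G)) := by
    rw [Rop]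
    have h1 : (fun x : ℝ => (Complex.exp (Complex.I * (x:ℂ)^2 / (2*(t:ℂ))) - 1)
        * FTinv (⇑f) x) = ⇑G := funext fun x => (hG x).symm
    rw [h1]
  have hFG : FT (⇑G) = fun ξ => (((2*Real.pi) ^ (-(1:ℝ)/2) : ℝ):ℂ) * 𝓕 (⇑G) (ξ/(2*Real.pi)) :=
    funext (FT_eq ⇑G)
  have h𝓕G : ⇑(fourierTransformCLM ℂ G) = 𝓕 ⇑G := (congrArg (⇑) (fourierTransformCLM_apply ℂ G)).trans (SchwartzMap.fourier_coe G)
  have h𝓕Gcont : Continuous (𝓕 ⇑G) := h𝓕G ▸ (fourierTransformCLM ℂ G).continuous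
  have hFTGcont : Continuous (FT ⇑G) := by
    rw [hFG]
    exact continuous_const.mul (h𝓕Gcont.comp (continuous_id.div_const _))
  have eA : eLpNorm (Rop t ⇑f) 2 volume = eLpNorm (Dop t (FT ⇑G)) 2 volume := by
    rw [hRop]
    refine eLpNorm_congr_norm_ae (Eventually.of_forall fun x => ?_)
    show ‖Complex.exp (Complex.I * (x:ℂ)^2 / (2*(t:ℂ))) * (Dop t (FT ⇑G) x)‖ = _
    rw [norm_mul, hm x, norm_expquad c hcre, one_mul]
  set k : ℂ := (Complex.I * (t:ℂ)) ^ (-(1/2 : ℂ)) with hkdef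
  have eB : eLpNorm (Dop t (FT ⇑G)) 2 volume
      = (‖k‖₊ : ℝ≥0∞) * eLpNorm (fun x => FT ⇑G (x/t)) 2 volume := by
    have hD : Dop t (FT ⇑G) = k • (fun x : ℝ => FT ⇑G (x/t)) := by
      funext x
      simp only [Dop, Pi.smul_apply, smul_eq_mul, hkdef]
    rw [hD, eLpNorm_const_smul]
    rfl
  have hknorm : ‖k‖ = |t| ^ (-(1/2) : ℝ) := by
    have h1 : (-(1/2:ℂ)) = ((-(1/2):ℝ) : ℂ) := by norm_num
    rw [hkdef, h1, Complex.norm_cpow_real]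
    congr 1
    rw [norm_mul, Complex.norm_I, Complex.norm_real, Real.norm_eq_abs, one_mul]
  have eC : eLpNorm (fun x => FT ⇑G (x/t)) 2 volume
      = ENNReal.ofReal (|t| ^ ((1:ℝ)/2)) * eLpNorm (FT ⇑G) 2 volume :=
    eLp_comp_div (FT ⇑G) hFTGcont ht0
  have eD : eLpNorm (FT ⇑G) 2 volume = eLpNorm (⇑G) 2 volume := by
    rw [hFG]
    have hsm : (fun ξ : ℝ => (((2*Real.pi) ^ (-(1:ℝ)/2) : ℝ):ℂ) * 𝓕 (⇑G) (ξ/(2*Real.pi)))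
        = ((((2*Real.pi) ^ (-(1:ℝ)/2) : ℝ):ℂ)) • (fun ξ : ℝ => 𝓕 (⇑G) (ξ/(2*Real.pi))) := by
      funext ξ
      simp only [Pi.smul_apply, smul_eq_mul]
    rw [hsm, eLpNorm_const_smul, eLp_comp_div (𝓕 ⇑G) h𝓕Gcont (ne_of_gt hπ), planch G]
    show (‖(((2*Real.pi) ^ (-(1:ℝ)/2) : ℝ):ℂ)‖₊ : ℝ≥0∞) * _ = _
    have hcoef : (‖(((2*Real.pi) ^ (-(1:ℝ)/2) : ℝ):ℂ)‖₊ : ℝ≥0∞)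
        = ENNReal.ofReal ((2*Real.pi) ^ (-(1:ℝ)/2)) := by
      rw [← enorm_eq_nnnorm, ← ofReal_norm, Complex.norm_real, Real.norm_eq_abs,
        abs_of_pos (Real.rpow_pos_of_pos hπ _)]
    rw [hcoef, ← mul_assoc, ← ENNReal.ofReal_mul (by positivity)]
    have hone : (2*Real.pi) ^ (-(1:ℝ)/2) * |2*Real.pi| ^ ((1:ℝ)/2) = 1 := by
      rw [abs_of_pos hπ, ← Real.rpow_add hπ]
      norm_num
    rw [hone, ENNReal.ofReal_one, one_mul]
  set W : ℝ → ℂ := fun x => ((((1+x^2) ^ θ : ℝ)):ℂ) * FTinv (⇑f) x with hWdef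
  have eE : eLpNorm (⇑G) 2 volume ≤
      eLpNorm ((((2 * |t| ^ (-θ) : ℝ)):ℂ) • W) 2 volume := by
    refine eLpNorm_mono fun x => ?_
    rw [hG x]
    have harg : Complex.I * (x:ℂ)^2/(2*(t:ℂ)) = Complex.I * ((x^2/(2*t) : ℝ) : ℂ) := by
      push_cast
      ring
    have hb1 : ‖Complex.exp (Complex.I * (x:ℂ)^2/(2*(t:ℂ))) - 1‖ ≤ 2 * (x^2/(2*|t|)) ^ θ := by
      rw [harg]
      have h2 := exp_sub_one_bound hθ0 hθ1 (x^2/(2*t))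
      rwa [abs_div, _root_.abs_of_nonneg (sq_nonneg x), abs_mul, _root_.abs_two] at h2
    have hb2 : (x^2/(2*|t|) : ℝ) ^ θ ≤ (1+x^2) ^ θ * |t| ^ (-θ) := by
      have h1 : x^2/(2*|t|) ≤ (1+x^2)/|t| := by
        rw [div_le_div_iff₀ (by positivity) htpos]
        nlinarith [sq_nonneg x]
      have h2 := Real.rpow_le_rpow (by positivity) h1 hθ0
      rw [Real.div_rpow (by positivity) (abs_nonneg t)] at h2
      rwa [Real.rpow_neg (abs_nonneg t), ← div_eq_mul_inv]
    have hWx : ‖((((2 * |t| ^ (-θ) : ℝ)):ℂ) • W) x‖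
        = 2 * |t|^(-θ) * ((1+x^2)^θ * ‖FTinv (⇑f) x‖) := by
      simp only [Pi.smul_apply, smul_eq_mul, hWdef, norm_mul, Complex.norm_real,
        Real.norm_eq_abs]
      rw [_root_.abs_two, _root_.abs_of_nonneg (Real.rpow_nonneg (abs_nonneg t) (-θ)),
        _root_.abs_of_nonneg (by positivity : (0:ℝ) ≤ (1+x^2) ^ θ)]
    rw [hWx, norm_mul]
    have hFTnn : (0:ℝ) ≤ ‖FTinv (⇑f) x‖ := norm_nonneg _
    calc ‖Complex.exp (Complex.I * (x:ℂ)^2/(2*(t:ℂ))) - 1‖ * ‖FTinv (⇑f) x‖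
        ≤ (2 * (x^2/(2*|t|)) ^ θ) * ‖FTinv (⇑f) x‖ := by
          exact mul_le_mul_of_nonneg_right hb1 hFTnn
      _ ≤ (2 * ((1+x^2) ^ θ * |t| ^ (-θ))) * ‖FTinv (⇑f) x‖ := by
          refine mul_le_mul_of_nonneg_right ?_ hFTnn
          linarith
      _ = 2 * |t|^(-θ) * ((1+x^2)^θ * ‖FTinv (⇑f) x‖) := by ring
  have eF : eLpNorm ((((2 * |t| ^ (-θ) : ℝ)):ℂ) • W) 2 volume
      = ENNReal.ofReal (2 * |t| ^ (-θ)) * eLpNorm W 2 volume := by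
    rw [eLpNorm_const_smul]
    show (‖(((2 * |t| ^ (-θ) : ℝ)):ℂ)‖₊ : ℝ≥0∞) * _ = _
    congr 1
    rw [← enorm_eq_nnnorm, ← ofReal_norm, Complex.norm_real, Real.norm_eq_abs,
      _root_.abs_of_nonneg (by positivity : (0:ℝ) ≤ 2 * |t| ^ (-θ))]
  set Wxi : ℝ → ℂ := fun ξ => ((((1+ξ^2) ^ θ : ℝ)):ℂ) * FT (⇑f) ξ with hWxidef
  have hFf : FT (⇑f) = fun ξ => (((2*Real.pi) ^ (-(1:ℝ)/2) : ℝ):ℂ) * 𝓕 (⇑f) (ξ/(2*Real.pi)) :=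
    funext (FT_eq ⇑f)
  have h𝓕f : ⇑(fourierTransformCLM ℂ f) = 𝓕 ⇑f := (congrArg (⇑) (fourierTransformCLM_apply ℂ f)).trans (SchwartzMap.fourier_coe f)
  have hWxicont : Continuous Wxi := by
    rw [hWxidef]
    refine Continuous.mul ?_ ?_
    · exact Complex.continuous_ofReal.comp
        ((continuous_const.add (continuous_pow 2)).rpow_const fun x => Or.inr hθ0)
    · rw [hFf]
      exact continuous_const.mul
        ((h𝓕f ▸ (fourierTransformCLM ℂ f).continuous).comp (continuous_id.div_const _))
  have eG : eLpNorm W 2 volume = eLpNorm Wxi 2 volume := by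
    have hcomp : W = Wxi ∘ Neg.neg := by
      funext x
      simp only [Function.comp_apply, hWxidef, hWdef]
      rw [FTinv_eq, neg_sq]
    rw [hcomp]
    exact eLpNorm_comp_measurePreserving hWxicont.aestronglyMeasurable
      (Measure.measurePreserving_neg volume)
  have eH : HsNorm (2*θ) (⇑f) = eLpNorm Wxi 2 volume := by
    rw [HsNorm, hWxidef]
    have h1 : (2*θ)/2 = θ := by ring
    rw [h1]
  have hconst : (‖k‖₊ : ℝ≥0∞) * ENNReal.ofReal (|t| ^ ((1:ℝ)/2)) = 1 := by
    rw [← enorm_eq_nnnorm, ← ofReal_norm, hknorm, ← ENNReal.ofReal_mul (by positivity),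
      ← Real.rpow_add htpos]
    norm_num
  calc eLpNorm (Rop t ⇑f) 2 volume
      = (‖k‖₊ : ℝ≥0∞) * (ENNReal.ofReal (|t| ^ ((1:ℝ)/2)) * eLpNorm (⇑G) 2 volume) := by
        rw [eA, eB, eC, eD]
    _ = eLpNorm (⇑G) 2 volume := by rw [← mul_assoc, hconst, one_mul]
    _ ≤ ENNReal.ofReal (2 * |t| ^ (-θ)) * eLpNorm W 2 volume := eE.trans (le_of_eq eF)
    _ = ENNReal.ofReal (2 * |t| ^ (-θ)) * HsNorm (2*θ) ⇑f := by rw [eG, ← eH]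

end
end
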